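/- arXiv:2310.00472 — 2 statements merged into one kernel-verified Lean document; each statement's English description precedes it below -/
import Mathlib

section
/- Let f : A → B be a homomorphism of commutative rings such that for every maximal ideal 𝔪 of B the preimage f⁻¹(𝔪) is a maximal ideal of A. Let M be a finitely generated B-module, regarded as an A-module via f. If M ⊗_A (A/𝔫) = 0 for every maximal ideal 𝔫 of A (equivalently, M = 𝔫M for every maximal ideal 𝔫 of A, the action of 𝔫 being through f), then M = 0. -/
/-- Let `f : A → B` be a ring homomorphism such that the contraction of every maximal
ideal of `B` is a maximal ideal of `A`.  If `M` is a finitely generated `B`-module with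
`M = 𝔫M` for every maximal ideal `𝔫` of `A` (the action of `𝔫` being through `f`,
equivalently `M ⊗_A A/𝔫 = 0`), then `M = 0`. -/
theorem finitely_generated_module_vanishes_of_fiberwise_vanishing
    {A B : Type*} [CommRing A] [CommRing B] (f : A →+* B)
    (hmax : ∀ 𝔪 : Ideal B, 𝔪.IsMaximal → (𝔪.comap f).IsMaximal)
    (M : Type*) [AddCommGroup M] [Module B M] [Module.Finite B M]
    (hvanish : ∀ 𝔫 : Ideal A, 𝔫.IsMaximal →
      (𝔫.map f) • (⊤ : Submodule B M) = (⊤ : Submodule B M)) :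
    Subsingleton M := by
  by_contra h
  have : Nontrivial M := not_subsingleton_iff_nontrivial.mp h
  -- the annihilator of M is a proper ideal
  have hann : Module.annihilator B M ≠ ⊤ := by
    intro ht
    obtain ⟨x, y, hxy⟩ := exists_pair_ne M
    have h1 : (1 : B) ∈ Module.annihilator B M := ht ▸ Submodule.mem_top
    have hx := Module.mem_annihilator.mp h1 x
    have hy := Module.mem_annihilator.mp h1 y
    simp only [one_smul] at hx hy
    exact hxy (hx.trans hy.symm)
  obtain ⟨𝔪, h𝔪max, h𝔪le⟩ := Ideal.exists_le_maximal _ hann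
  set 𝔫 := 𝔪.comap f with h𝔫
  have h𝔫max := hmax 𝔪 h𝔪max
  have hmaple : 𝔫.map f ≤ 𝔪 := Ideal.map_comap_le
  have hsmul : 𝔪 • (⊤ : Submodule B M) = ⊤ := by
    refine le_antisymm le_top ?_
    calc (⊤ : Submodule B M) = 𝔫.map f • ⊤ := (hvanish 𝔫 h𝔫max).symm
      _ ≤ 𝔪 • ⊤ := Submodule.smul_mono_left hmaple
  obtain ⟨r, hr1, hr0⟩ :=
    Submodule.exists_sub_one_mem_and_smul_eq_zero_of_fg_of_le_smul 𝔪 ⊤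
      (Module.Finite.fg_top) hsmul.ge
  have hrann : r ∈ Module.annihilator B M :=
    Module.mem_annihilator.mpr fun m => hr0 m Submodule.mem_top
  have : (1 : B) ∈ 𝔪 := by
    have := 𝔪.sub_mem (h𝔪le hrann) hr1
    simpa using this
  exact h𝔪max.ne_top (Ideal.eq_top_of_isUnit_mem _ this isUnit_one)
end

section
/- Let R be a commutative ring, a ≤ b integers, and K a cochain complex of R-modules such that Kⁱ is finitely generated projective for a ≤ i ≤ b and Kⁱ = 0 otherwise. If H^b(K) = 0, then there is a cochain complex K′ of R-modules with K′ⁱ finitely generated projective for a ≤ i ≤ b−1 and K′ⁱ = 0 otherwise, together with a quasi-isomorphism K′ → K (a chain map inducing isomorphisms on all cohomology modules). Concretely, one may take K′ to agree with K in degrees < b−1, take K′^{b−1} = ker(d^{b−1} : K^{b−1} → K^b), which is a finitely generated projective direct summand of K^{b−1}, and let K′ → K be the evident inclusion. -/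
/-!
Since `Hᵇ(K) = 0` and `Kᵇ⁺¹ = 0`, the differential `dᵇ⁻¹ : Kᵇ⁻¹ → Kᵇ` is surjective onto a
projective module, hence split, so its kernel is a finitely generated projective direct summand
of `Kᵇ⁻¹`. The canonical truncation `τ≤b-1 K` (equal to `K` below `b - 1` and to `ker dᵇ⁻¹` in
degree `b - 1`) therefore has the required terms, and its inclusion into `K` is a
quasi-isomorphism because `K` has no cohomology above `b - 1`.
-/

open CategoryTheory Limits

namespace LinearMap

variable {R M N : Type*} [Ring R] [AddCommGroup M] [Module R M] [AddCommGroup N] [Module R N]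

theorem exists_leftInverse_ker_subtype [Module.Projective R N] {f : M →ₗ[R] N}
    (hf : Function.Surjective f) : ∃ r : M →ₗ[R] ker f, r ∘ₗ (ker f).subtype = id := by
  obtain ⟨s, hs⟩ := Module.projective_lifting_property f id hf
  have hsplit := (exact_subtype_ker_map f).split_tfae (ker f).injective_subtype hf
  exact (hsplit.out 0 1).mp (⟨s, hs⟩ : ∃ s : N →ₗ[R] M, f ∘ₗ s = id)

end LinearMap

namespace Module

variable {R M N : Type*} [Ring R] [AddCommGroup M] [Module R M] [AddCommGroup N] [Module R N]
  [Module.Projective R N] {f : M →ₗ[R] N}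

theorem Projective.ker_of_surjective [Module.Projective R M] (hf : Function.Surjective f) :
    Module.Projective R (LinearMap.ker f) :=
  have ⟨_, hr⟩ := LinearMap.exists_leftInverse_ker_subtype hf
  .of_split _ _ hr

theorem Finite.ker_of_surjective [Module.Finite R M] (hf : Function.Surjective f) :
    Module.Finite R (LinearMap.ker f) :=
  have ⟨r, hr⟩ := LinearMap.exists_leftInverse_ker_subtype hf
  .of_surjective r (Function.LeftInverse.surjective (LinearMap.congr_fun hr))

end Module

namespace CochainComplex

section ModuleCat

variable {R : Type*} [Ring R] (K : CochainComplex (ModuleCat R) ℤ)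

noncomputable def truncLEXIsoKer {n j : ℤ} (hnj : n + 1 = j) :
    (K.truncLE n).X n ≅ ModuleCat.of R (LinearMap.ker (K.d n j).hom) :=
  K.truncLEXIsoCycles n ≪≫ K.cyclesIsoSc' (n - 1) n j (by simp) (by simp [hnj]) ≪≫
    (K.sc' _ _ _).moduleCatCyclesIso

theorem surjective_d_of_isZero_homology {i j k : ℤ} (hij : i + 1 = j) (hjk : j + 1 = k)
    (hH : IsZero (K.homology j)) (hX : IsZero (K.X k)) : Function.Surjective (K.d i j) := by
  have hexact := (K.exactAt_iff_isZero_homology j).mpr hH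
  rw [K.exactAt_iff' i j k (by simp; omega) (by simp; omega),
    ShortComplex.exact_iff_epi _ (hX.eq_of_tgt _ _), ModuleCat.epi_iff_surjective] at hexact
  exact hexact

end ModuleCat

variable {C : Type*} [Category* C] [HasZeroMorphisms C] [CategoryWithHomology C]
  (K : CochainComplex C ℤ)

theorem isLE_pred_of_isZero_homology {b : ℤ} [K.IsStrictlyLE b] (hH : IsZero (K.homology b)) :
    K.IsLE (b - 1) := by
  rw [isLE_iff]
  intro i hi
  obtain rfl | hlt := (show b ≤ i by omega).eq_or_lt
  · exact (K.exactAt_iff_isZero_homology b).mpr hH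
  · exact .of_isZero (K.isZero_of_isStrictlyLE b i)

end CochainComplex

/-- A perfect cochain complex of `R`-modules concentrated in degrees `[a, b]`
(finitely generated projective in each degree) whose top cohomology `H^b` vanishes is
quasi-isomorphic to a complex of finitely generated projective modules concentrated in
degrees `[a, b-1]`. -/
theorem perfect_amplitude_drop_of_top_cohomology_vanishes
    {R : Type} [CommRing R] (a b : ℤ) (hab : a ≤ b)
    (K : CochainComplex (ModuleCat R) ℤ)
    (hfin : ∀ i : ℤ, a ≤ i → i ≤ b →
      Module.Finite R (K.X i) ∧ Module.Projective R (K.X i))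
    (hzero : ∀ i : ℤ, (i < a ∨ b < i) → Limits.IsZero (K.X i))
    (hHb : Limits.IsZero (K.homology b)) :
    ∃ (K' : CochainComplex (ModuleCat R) ℤ) (φ : K' ⟶ K),
      (∀ i : ℤ, a ≤ i → i ≤ b - 1 →
        Module.Finite R (K'.X i) ∧ Module.Projective R (K'.X i)) ∧
      (∀ i : ℤ, (i < a ∨ b - 1 < i) → Limits.IsZero (K'.X i)) ∧
      QuasiIso φ := by
  have : K.IsStrictlyLE b := (K.isStrictlyLE_iff b).mpr fun i hi ↦ hzero i (.inr hi)
  have hd : Function.Surjective (K.d (b - 1) b) :=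
    K.surjective_d_of_isZero_homology (by omega) rfl hHb (hzero _ (.inr (by omega)))
  refine ⟨K.truncLE (b - 1), K.ιTruncLE (b - 1), fun i hai hib ↦ ?_, fun i hi ↦ ?_, ?_⟩
  · obtain ⟨_, _⟩ := hfin i hai (by omega)
    obtain rfl | hlt := hib.eq_or_lt
    · have : Module.Projective R (K.X b) := (hfin b hab le_rfl).2
      have := Module.Finite.ker_of_surjective hd
      have := Module.Projective.ker_of_surjective hd
      let e := (K.truncLEXIsoKer (by omega : b - 1 + 1 = b)).toLinearEquiv
      exact ⟨.equiv e.symm, .of_equiv e.symm⟩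
    · let e := (K.truncLEXIso (b - 1) i hlt).toLinearEquiv
      exact ⟨.equiv e.symm, .of_equiv e.symm⟩
  · rcases hi with hi | hi
    · exact (hzero i (.inl hi)).of_mono ((HomologicalComplex.ιTruncLE K _).f i)
    · exact (K.truncLE (b - 1)).isZero_of_isStrictlyLE (b - 1) i hi
  · rw [CochainComplex.quasiIso_ιTruncLE_iff]
    exact K.isLE_pred_of_isZero_homology hHb
end
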